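/- Let X = Y'21Y'' be a word in {0,1,2} beginning with 1 (the 2 and 1 shown are at adjacent positions). Then weight(X) = weight(Y'1Y''), where weight denotes the number of toric rhombic alternative tableaux fillings of the corresponding type. In terms of X-consistent lists: the X-consistent lists for Y'21Y'' are in bijection with the X-consistent lists for Y'1Y''. -/

import Mathlib

/-!
Deleting the 2 at position `m` reindexes the remaining positions along the increasing
bijection `ℕ → ℕ \ {m}`. As position `m` holds neither a 0 nor a 1, the reindexing preserves the
0's and, for each 0, its nearest preceding 1 together with the 0's lying between them. As a 1
immediately follows position `m`, every 0 lies on the same side of `m` as its nearest preceding 1,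
so the gap `x_i - b_i` is unchanged too. Hence the constraints of the two words correspond one to
one, and the consistent lists of `Y'21Y''` are those of `Y'1Y''` with a 0 inserted at `m`.
-/

/-- `bmax X i` is the position of the nearest 1 strictly before position `i`
(positions are `1, …, n`; well-defined when `X 1 = 1` and `i > 1`). -/
def bmax (X : ℕ → Fin 3) (i : ℕ) : ℕ :=
  ((Finset.Ioo 0 i).filter (fun j => X j = 1)).sup id

/-- An `X`-consistent list: a tuple of nonnegative integers `w`, supported on the positions
of the 0's of `X`, such that for every position `i` of a 0,
`Σ_{j : b_i < x_j ≤ x_i} w_{x_j} + 1 ≤ i − b_i`, where `b_i = bmax X i`. -/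
def XConsistent (n : ℕ) (X : ℕ → Fin 3) (w : ℕ → ℕ) : Prop :=
  (∀ i ∈ Finset.Icc 1 n, X i = 0 →
    (((Finset.Icc 1 n).filter (fun j => X j = 0 ∧ bmax X i < j ∧ j ≤ i)).sum w) + 1
      ≤ i - bmax X i) ∧
  ∀ j, ¬(j ∈ Finset.Icc 1 n ∧ X j = 0) → w j = 0

open Finset Function

/-- The `ℕ`-analogue of `Fin.succAbove`. -/
def succAbove (m j : ℕ) : ℕ := if j < m then j else j + 1

section succAbove

variable {m : ℕ}

lemma succAbove_strictMono (m : ℕ) : StrictMono (succAbove m) := by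
  intro a b h
  unfold succAbove
  split_ifs <;> omega

lemma succAbove_ne (m j : ℕ) : succAbove m j ≠ m := by
  unfold succAbove
  split_ifs <;> omega

lemma exists_succAbove_eq {k : ℕ} (hk : k ≠ m) : ∃ j, succAbove m j = k :=
  if h : k < m then ⟨k, if_pos h⟩ else ⟨k - 1, by unfold succAbove; split_ifs <;> omega⟩

lemma forall_iff_and_forall_succAbove (m : ℕ) {P : ℕ → Prop} :
    (∀ k, P k) ↔ P m ∧ ∀ j, P (succAbove m j) := by
  refine ⟨fun h => ⟨h m, fun j => h _⟩, fun ⟨hm, h⟩ k => ?_⟩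
  by_cases hk : k = m
  · exact hk ▸ hm
  · obtain ⟨j, rfl⟩ := exists_succAbove_eq hk
    exact h j

lemma succAbove_mem_Ioo_iff (hm : 0 < m) (i j : ℕ) :
    succAbove m j ∈ Ioo 0 (succAbove m i) ↔ j ∈ Ioo 0 i := by
  simp only [mem_Ioo, succAbove]
  split_ifs <;> omega

lemma succAbove_mem_Icc_iff {n : ℕ} (hm : 0 < m) (hmn : m ≤ n) (j : ℕ) :
    succAbove m j ∈ Icc 1 n ↔ j ∈ Icc 1 (n - 1) := by
  simp only [mem_Icc, succAbove]
  split_ifs <;> omega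

lemma filter_eq_map_succAbove {A B : Finset ℕ} (hAB : ∀ j, succAbove m j ∈ B ↔ j ∈ A)
    {P : ℕ → Prop} [DecidablePred P] (hP : ¬P m) :
    B.filter P = (A.filter fun j => P (succAbove m j)).map
      ⟨succAbove m, (succAbove_strictMono m).injective⟩ := by
  ext k
  by_cases hk : k = m
  · subst hk
    simp [hP, succAbove_ne]
  · obtain ⟨j, rfl⟩ := exists_succAbove_eq hk
    simp [hAB]

end succAbove

section bmax

variable {X : ℕ → Fin 3} {m : ℕ}

lemma bmax_le_self (X : ℕ → Fin 3) (i : ℕ) : bmax X i ≤ i :=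
  Finset.sup_le fun _ hj => (mem_Ioo.1 (mem_filter.1 hj).1).2.le

lemma le_bmax {i j : ℕ} (hj : 0 < j) (hji : j < i) (hX : X j = 1) : j ≤ bmax X i :=
  Finset.le_sup (f := id) (mem_filter.2 ⟨mem_Ioo.2 ⟨hj, hji⟩, hX⟩)

lemma bmax_succAbove (hm : 0 < m) (hX : X m ≠ 1) (i : ℕ) :
    bmax X (succAbove m i) = succAbove m (bmax (X ∘ succAbove m) i) := by
  unfold bmax
  rw [filter_eq_map_succAbove (succAbove_mem_Ioo_iff hm i) hX, sup_map,
    apply_sup_eq_sup_comp_of_linearOrder _ (succAbove_strictMono m).monotone (if_pos hm)]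
  rfl

lemma sub_bmax_succAbove (hm : 0 < m) (h2 : X m = 2) (h1 : X (m + 1) = 1) {i : ℕ}
    (hi : X (succAbove m i) = 0) :
    succAbove m i - bmax X (succAbove m i) = i - bmax (X ∘ succAbove m) i := by
  rw [bmax_succAbove hm (by simp [h2])]
  have hb := bmax_le_self (X ∘ succAbove m) i
  have hsm : succAbove m m = m + 1 := if_neg (lt_irrefl m)
  have hblock : m < i → m ≤ bmax (X ∘ succAbove m) i := fun hmi =>
    le_bmax hm hmi (by simpa [hsm] using h1)
  have him : i ≠ m := by rintro rfl; simp [hsm, h1] at hi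
  generalize bmax (X ∘ succAbove m) i = b at hb hblock
  unfold succAbove
  split_ifs <;> omega

lemma sum_block_succAbove {n : ℕ} (hm : 0 < m) (hmn : m ≤ n) (h2 : X m = 2)
    (w : ℕ → ℕ) (i : ℕ) :
    ((Icc 1 n).filter fun k => X k = 0 ∧ bmax X (succAbove m i) < k ∧ k ≤ succAbove m i).sum w =
      ((Icc 1 (n - 1)).filter fun j =>
        (X ∘ succAbove m) j = 0 ∧ bmax (X ∘ succAbove m) i < j ∧ j ≤ i).sum (w ∘ succAbove m) := by
  rw [bmax_succAbove hm (by simp [h2]),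
    filter_eq_map_succAbove (succAbove_mem_Icc_iff hm hmn) (by simp [h2]), sum_map]
  simp only [(succAbove_strictMono m).lt_iff_lt, (succAbove_strictMono m).le_iff_le]
  rfl

theorem xConsistent_iff_comp_succAbove {n : ℕ} (hm : 0 < m) (hmn : m ≤ n) (h2 : X m = 2)
    (h1 : X (m + 1) = 1) (w : ℕ → ℕ) :
    XConsistent n X w ↔ w m = 0 ∧ XConsistent (n - 1) (X ∘ succAbove m) (w ∘ succAbove m) := by
  unfold XConsistent
  rw [forall_iff_and_forall_succAbove m,
    forall_iff_and_forall_succAbove m (P := fun k => ¬_ → w k = 0)]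
  have hX0 : X m ≠ 0 := by simp [h2]
  simp +contextual only [hX0, succAbove_mem_Icc_iff hm hmn, sum_block_succAbove hm hmn h2,
    sub_bmax_succAbove hm h2 h1, comp_apply, and_false, not_false_eq_true,
    IsEmpty.forall_iff, forall_const]
  tauto

end bmax

section compSuccAbove

variable {α : Type*} [Zero α]

lemma extend_succAbove_self (m : ℕ) (w : ℕ → α) : extend (succAbove m) w 0 m = 0 :=
  extend_apply' _ _ _ fun ⟨j, hj⟩ => succAbove_ne m j hj

noncomputable def compSuccAboveEquiv (m : ℕ) : {w : ℕ → α // w m = 0} ≃ (ℕ → α) where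
  toFun w := w.1 ∘ succAbove m
  invFun w := ⟨extend (succAbove m) w 0, extend_succAbove_self m w⟩
  left_inv w := Subtype.ext <| funext fun k => by
    by_cases hk : k = m
    · subst hk
      exact (extend_succAbove_self k _).trans w.2.symm
    · obtain ⟨j, rfl⟩ := exists_succAbove_eq hk
      exact (succAbove_strictMono m).injective.extend_apply _ _ _
  right_inv w := extend_comp (succAbove_strictMono m).injective _ _

end compSuccAbove

theorem weight_delete_two_before_one_general (n m : ℕ) (X : ℕ → Fin 3)
    (hm : 2 ≤ m) (hmn : m + 1 ≤ n) (h2 : X m = 2) (h1 : X (m + 1) = 1) :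
    Nonempty ({w : ℕ → ℕ // XConsistent n X w} ≃
      {w : ℕ → ℕ // XConsistent (n - 1) (fun j => if j < m then X j else X (j + 1)) w}) := by
  have hX : (fun j => if j < m then X j else X (j + 1)) = X ∘ succAbove m :=
    funext fun j => (apply_ite X _ _ _).symm
  rw [hX]
  exact ⟨(Equiv.subtypeEquivRight fun w =>
      xConsistent_iff_comp_succAbove (by omega) (by omega) h2 h1 w).trans <|
    (Equiv.subtypeSubtypeEquivSubtypeInter _ _).symm.trans <|
      (compSuccAboveEquiv m).subtypeEquiv fun _ => Iff.rfl⟩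

/-- If `X = Y'21Y''` begins with a 1 and has an adjacent pair `21` at positions
`m, m+1`, then `weight(Y'21Y'') = weight(Y'1Y'')`: the `X`-consistent lists for
`Y'21Y''` are in bijection with those for `Y'1Y''` (obtained by deleting the 2 at
position `m`), so the TRAT counts agree. -/
theorem weight_delete_two_before_one (n m : ℕ) (X : ℕ → Fin 3) (hX1 : X 1 = 1)
    (hm : 2 ≤ m) (hmn : m + 1 ≤ n) (h2 : X m = 2) (h1 : X (m + 1) = 1) :
    Nonempty ({w : ℕ → ℕ // XConsistent n X w} ≃
      {w : ℕ → ℕ // XConsistent (n - 1) (fun j => if j < m then X j else X (j + 1)) w}) :=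
  weight_delete_two_before_one_general n m X hm hmn h2 h1
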